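/- In a unique product group G, every n-atom for a finite nonempty set C ⊆ G has cardinality exactly n. -/

import Mathlib

open Pointwise

/-- `V` is an `n`-fragment for `C`: `|V| ≥ n` and `|VC| - |V|` attains the minimum
`κ_n(C) = min {|XC| - |X| : X ⊆ G finite, |X| ≥ n}`. -/
def IsNFragment {G : Type*} [Group G] [DecidableEq G] (n : ℕ) (C V : Finset G) : Prop :=
  n ≤ V.card ∧ ∀ X : Finset G, n ≤ X.card →
    ((V * C).card : ℤ) - V.card ≤ ((X * C).card : ℤ) - X.card

/-- `U` is an `n`-atom for `C`: an `n`-fragment of minimal cardinality. -/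
def IsNAtom {G : Type*} [Group G] [DecidableEq G] (n : ℕ) (C U : Finset G) : Prop :=
  IsNFragment n C U ∧ ∀ V : Finset G, IsNFragment n C V → U.card ≤ V.card

/-- `G` has the unique product property. -/
def UniqueProductGroup (G : Type*) [Group G] : Prop :=
  ∀ A B : Finset G, A.Nonempty → B.Nonempty →
    ∃ a ∈ A, ∃ b ∈ B, ∀ a' ∈ A, ∀ b' ∈ B, a' * b' = a * b → a' = a ∧ b' = b

/-!
If an `n`-atom `U` had more than `n` elements, pick a unique product `a * c ∈ U * C`.
Removing `a` from `U` loses the element `a * c` of `U * C`, so `|U'C| - |U'|` does not grow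
and `U' = U \ {a}` is a smaller `n`-fragment, contradicting minimality.
-/

theorem UniqueProductGroup.exists_card_erase_mul_lt {G : Type*} [Group G] [DecidableEq G]
    (hG : UniqueProductGroup G) {U C : Finset G} (hU : U.Nonempty) (hC : C.Nonempty) :
    ∃ a ∈ U, ((U.erase a) * C).card < (U * C).card := by
  obtain ⟨a, ha, c, hc, huniq⟩ := hG U C hU hC
  refine ⟨a, ha, Finset.card_lt_card ⟨Finset.mul_subset_mul_right (Finset.erase_subset a U),
    fun hsub => ?_⟩⟩
  obtain ⟨a', ha', c', hc', hac⟩ := Finset.mem_mul.mp (hsub (Finset.mul_mem_mul ha hc))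
  exact Finset.ne_of_mem_erase ha' (huniq a' (Finset.mem_of_mem_erase ha') c' hc' hac).1

theorem IsNFragment.erase {G : Type*} [Group G] [DecidableEq G] {n : ℕ} {C V : Finset G}
    (hV : IsNFragment n C V) (hn : n < V.card) {a : G} (ha : a ∈ V)
    (hlt : ((V.erase a) * C).card < (V * C).card) :
    IsNFragment n C (V.erase a) := by
  have hcard : (V.erase a).card + 1 = V.card := Finset.card_erase_add_one ha
  refine ⟨by omega, fun X hX => le_trans ?_ (hV.2 X hX)⟩
  omega

theorem stmt12_general {G : Type*} [Group G] [DecidableEq G]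
    (hG : UniqueProductGroup G) (n : ℕ)
    (C : Finset G) (hC : C.Nonempty) (U : Finset G) (hU : IsNAtom n C U) :
    U.card = n := by
  obtain ⟨hfrag, hmin⟩ := hU
  by_contra hne
  have hlt : n < U.card := lt_of_le_of_ne hfrag.1 (Ne.symm hne)
  obtain ⟨a, ha, hshrink⟩ := hG.exists_card_erase_mul_lt (Finset.card_pos.mp (pos_of_gt hlt)) hC
  have hsmaller := hmin _ (hfrag.erase hlt ha hshrink)
  rw [Finset.card_erase_of_mem ha] at hsmaller
  omega

theorem stmt12 {G : Type*} [Group G] [DecidableEq G]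
    (hG : UniqueProductGroup G) (n : ℕ) (hn : 1 ≤ n)
    (C : Finset G) (hC : C.Nonempty) (U : Finset G) (hU : IsNAtom n C U) :
    U.card = n :=
  stmt12_general hG n C hC U hU
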